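/- Let c ∈ ℝ, let n ≥ 1 be an integer, and let f : [0,π] → ℝ be continuously differentiable with f(0) = 0 and f(π) = 0. Then ∫₀^π (f'(x) + c f(x)) ψ_n(x) dx = √(n² + c²) · ∫₀^π f(x) √(2/π) sin(nx) dx, where ψ_n(x) := (n² + c²)^{−1/2} √(2/π) (n cos(nx) + c sin(nx)). -/

import Mathlib

/-!
Integrating by parts, `∫ (f' + c f) g = ∫ f (c g - g')` for `f` vanishing at both endpoints, so
`A* = -∂ₓ + c` is the formal adjoint of `A = ∂ₓ + c`. A direct computation gives
`A* ψ_n = √(n² + c²) φ_n^D`, and the identity follows.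
-/

noncomputable section

/-- The Robin eigenfunctions `ψ_n = (n²+c²)^{-1/2} A φ_n^D` on `[0,π]`. -/
def robinEigen (c : ℝ) (n : ℕ) (x : ℝ) : ℝ :=
  (Real.sqrt ((n : ℝ) ^ 2 + c ^ 2))⁻¹ * Real.sqrt (2 / Real.pi) *
    ((n : ℝ) * Real.cos ((n : ℝ) * x) + c * Real.sin ((n : ℝ) * x))

open MeasureTheory Set

section ContDiffOnIcc

variable {E : Type*} [NormedAddCommGroup E] [NormedSpace ℝ E] {f : ℝ → E} {a b : ℝ}

theorem ContDiffOn.hasDerivAt_deriv_of_mem_Ioo (h : ContDiffOn ℝ 1 f (Icc a b)) {x : ℝ}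
    (hx : x ∈ Ioo a b) : HasDerivAt f (deriv f x) x :=
  ((h.differentiableOn one_ne_zero x (Ioo_subset_Icc_self hx)).differentiableAt
    (Icc_mem_nhds hx.1 hx.2)).hasDerivAt

theorem ContDiffOn.intervalIntegrable_deriv (h : ContDiffOn ℝ 1 f (Icc a b)) (hab : a ≤ b) :
    IntervalIntegrable (deriv f) volume a b := by
  rcases hab.eq_or_lt with rfl | hlt
  · exact IntervalIntegrable.refl
  -- `deriv f` agrees with the continuous `derivWithin f (Icc a b)` on the open interval
  have hcont := (h.derivWithin (m := 0) (uniqueDiffOn_Icc hlt) (by simp)).continuousOn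
  refine (hcont.intervalIntegrable_of_Icc hab).congr_ae ?_
  rw [uIoc_of_le hab, ← restrict_Ioo_eq_restrict_Ioc]
  filter_upwards [self_mem_ae_restrict measurableSet_Ioo] with x hx
  exact derivWithin_of_mem_nhds (Icc_mem_nhds hx.1 hx.2)

end ContDiffOnIcc

theorem integral_deriv_mul_add_mul_deriv_of_contDiffOn {A : Type*} [NormedRing A]
    [NormedAlgebra ℝ A] [CompleteSpace A] {f g : ℝ → A} {a b : ℝ} (hab : a ≤ b)
    (hf : ContDiffOn ℝ 1 f (Icc a b)) (hg : ContDiffOn ℝ 1 g (Icc a b)) :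
    ∫ x in a..b, deriv f x * g x + f x * deriv g x = f b * g b - f a * g a := by
  have hIoo : Ioo (min a b) (max a b) = Ioo a b := by rw [min_eq_left hab, max_eq_right hab]
  refine intervalIntegral.integral_deriv_mul_eq_sub_of_hasDerivAt ?_ ?_ ?_ ?_
    (hf.intervalIntegrable_deriv hab) (hg.intervalIntegrable_deriv hab)
  · simpa only [uIcc_of_le hab] using hf.continuousOn
  · simpa only [uIcc_of_le hab] using hg.continuousOn
  · exact fun x hx ↦ hf.hasDerivAt_deriv_of_mem_Ioo (hIoo ▸ hx)
  · exact fun x hx ↦ hg.hasDerivAt_deriv_of_mem_Ioo (hIoo ▸ hx)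

theorem integral_deriv_add_mul_mul_eq_integral_mul_sub_deriv {f g : ℝ → ℝ} {a b : ℝ}
    (hab : a ≤ b) (hf : ContDiffOn ℝ 1 f (Icc a b)) (hg : ContDiffOn ℝ 1 g (Icc a b))
    (hfa : f a = 0) (hfb : f b = 0) (c : ℝ) :
    ∫ x in a..b, (deriv f x + c * f x) * g x = ∫ x in a..b, f x * (c * g x - deriv g x) := by
  have hfc : ContinuousOn f (uIcc a b) := by simpa only [uIcc_of_le hab] using hf.continuousOn
  have hgc : ContinuousOn g (uIcc a b) := by simpa only [uIcc_of_le hab] using hg.continuousOn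
  have hf' := hf.intervalIntegrable_deriv hab
  have hg' := hg.intervalIntegrable_deriv hab
  have hparts := integral_deriv_mul_add_mul_deriv_of_contDiffOn hab hf hg
  rw [hfa, hfb, zero_mul, zero_mul, sub_zero] at hparts
  rw [← sub_eq_zero, ← intervalIntegral.integral_sub, ← hparts]
  · congr 1 with x
    ring
  · exact (hf'.add (hfc.intervalIntegrable.const_mul c)).mul_continuousOn hgc
  · exact ((hgc.intervalIntegrable.const_mul c).sub hg').continuousOn_mul hfc

theorem hasDerivAt_robinEigen (c : ℝ) (n : ℕ) (x : ℝ) :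
    HasDerivAt (robinEigen c n)
      ((Real.sqrt ((n : ℝ) ^ 2 + c ^ 2))⁻¹ * Real.sqrt (2 / Real.pi) *
        (c * n * Real.cos (n * x) - n ^ 2 * Real.sin (n * x))) x := by
  have hlin : HasDerivAt (fun x : ℝ ↦ (n : ℝ) * x) n x := hasDerivAt_const_mul _
  exact (((hlin.cos.const_mul (n : ℝ)).fun_add (hlin.sin.const_mul c)).const_mul
    ((Real.sqrt ((n : ℝ) ^ 2 + c ^ 2))⁻¹ * Real.sqrt (2 / Real.pi))).congr_deriv (by ring)

theorem mul_robinEigen_sub_deriv_robinEigen (c : ℝ) (n : ℕ) (x : ℝ) :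
    c * robinEigen c n x - deriv (robinEigen c n) x =
      Real.sqrt ((n : ℝ) ^ 2 + c ^ 2) * (Real.sqrt (2 / Real.pi) * Real.sin ((n : ℝ) * x)) := by
  rw [(hasDerivAt_robinEigen c n x).deriv, robinEigen]
  set s := Real.sqrt ((n : ℝ) ^ 2 + c ^ 2)
  -- also when `n = c = 0`, where `s = s⁻¹ = 0`
  have hs : s⁻¹ * ((n : ℝ) ^ 2 + c ^ 2) = s := by
    rw [← Real.sq_sqrt (by positivity : 0 ≤ (n : ℝ) ^ 2 + c ^ 2), sq, ← mul_assoc,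
      inv_mul_mul_self]
  linear_combination Real.sqrt (2 / Real.pi) * Real.sin (n * x) * hs

theorem intertwining_robin_dirichlet_general (c : ℝ) (n : ℕ) (f : ℝ → ℝ)
    (hf : ContDiffOn ℝ 1 f (Set.Icc 0 Real.pi)) (hf0 : f 0 = 0) (hfπ : f Real.pi = 0) :
    ∫ x in (0 : ℝ)..Real.pi, (deriv f x + c * f x) * robinEigen c n x =
      Real.sqrt ((n : ℝ) ^ 2 + c ^ 2) *
        ∫ x in (0 : ℝ)..Real.pi, f x * (Real.sqrt (2 / Real.pi) * Real.sin ((n : ℝ) * x)) := by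
  have hψ : ContDiffOn ℝ 1 (robinEigen c n) (Icc 0 Real.pi) := by
    unfold robinEigen
    fun_prop
  rw [integral_deriv_add_mul_mul_eq_integral_mul_sub_deriv Real.pi_pos.le hf hψ hf0 hfπ c,
    ← intervalIntegral.integral_const_mul]
  congr 1 with x
  rw [mul_robinEigen_sub_deriv_robinEigen]
  ring

theorem intertwining_robin_dirichlet (c : ℝ) (n : ℕ) (hn : 1 ≤ n) (f : ℝ → ℝ)
    (hf : ContDiffOn ℝ 1 f (Set.Icc 0 Real.pi)) (hf0 : f 0 = 0) (hfπ : f Real.pi = 0) :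
    ∫ x in (0 : ℝ)..Real.pi, (deriv f x + c * f x) * robinEigen c n x =
      Real.sqrt ((n : ℝ) ^ 2 + c ^ 2) *
        ∫ x in (0 : ℝ)..Real.pi, f x * (Real.sqrt (2 / Real.pi) * Real.sin ((n : ℝ) * x)) :=
  intertwining_robin_dirichlet_general c n f hf hf0 hfπ
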